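/- Assume additionally that A has full column rank n (equivalently N(A) = {0}), so that x* is the unique solution of Ax = b and the operator norm ‖T‖ is strictly less than 1. Let x_0 ∈ ℝ^n, r_0 := g − C x_0, and let x_k ∈ x_0 + K_k(C,r_0) satisfy the minimal-residual property ‖x_k − P(x_k)‖ ≤ ‖u − P(u)‖ for all u ∈ x_0 + K_k(C,r_0). Then ‖x_k − x*‖ ≤ ((1 + ‖T‖)/(1 − ‖T‖)) · ‖u − x*‖ for all u ∈ x_0 + K_k(C,r_0). -/

import Mathlib

open scoped RealInnerProductSpace

noncomputable section

abbrev Euc (n : ℕ) := EuclideanSpace ℝ (Fin n)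

/-- Intermediate Kaczmarz chain: `chainK Pj x j` is `y_j` with `y_0 = x`, `y_{j+1} = P_{j+1}(y_j)`. -/
def chainK {n p : ℕ} (Pj : Fin p → Euc n → Euc n) (x : Euc n) : ℕ → Euc n
  | 0 => x
  | j + 1 => if h : j < p then Pj ⟨j, h⟩ (chainK Pj x j) else chainK Pj x j

/-- The block Kaczmarz operator `P = P_p ∘ ⋯ ∘ P_1`. -/
def kacz {n p : ℕ} (Pj : Fin p → Euc n → Euc n) (x : Euc n) : Euc n := chainK Pj x p

/-- `f` sends each point to the (unique) nearest point of `S`. -/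
def IsNearestPointMap {n : ℕ} (S : Set (Euc n)) (f : Euc n → Euc n) : Prop :=
  ∀ x, f x ∈ S ∧ ∀ y ∈ S, dist x (f x) ≤ dist x y

/-- The stacked (full) matrix `A` with blocks `A_j`. -/
def fullA {n p : ℕ} (m : Fin p → ℕ)
    (A : ∀ j : Fin p, Euc n →ₗ[ℝ] Euc (m j)) :
    Euc n →ₗ[ℝ] PiLp 2 (fun j => Euc (m j)) :=
  (WithLp.linearEquiv 2 ℝ (∀ j, Euc (m j))).symm.toLinearMap ∘ₗ LinearMap.pi A

/-- The range of `Aᵀ` for the stacked matrix. -/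
def RAT {n p : ℕ} (m : Fin p → ℕ)
    (A : ∀ j : Fin p, Euc n →ₗ[ℝ] Euc (m j)) : Submodule ℝ (Euc n) :=
  LinearMap.range (LinearMap.adjoint (fullA m A))

/-- Orthogonal projection onto a subspace, as an endomorphism. -/
def projSub {n : ℕ} (K : Submodule ℝ (Euc n)) : Euc n →ₗ[ℝ] Euc n :=
  K.subtype ∘ₗ K.orthogonalProjectionOnto.toLinearMap

/-- `Tchain m A j = Q_j ∘ ⋯ ∘ Q_1`, with `Q_i` the orthogonal projection onto `N(A_i)`. -/
def Tchain {n p : ℕ} (m : Fin p → ℕ)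
    (A : ∀ j : Fin p, Euc n →ₗ[ℝ] Euc (m j)) :
    ℕ → (Euc n →ₗ[ℝ] Euc n)
  | 0 => LinearMap.id
  | j + 1 => if h : j < p then projSub (LinearMap.ker (A ⟨j, h⟩)) ∘ₗ Tchain m A j
             else Tchain m A j

/-- `T = Q_p ∘ ⋯ ∘ Q_1`. -/
def Tmap {n p : ℕ} (m : Fin p → ℕ)
    (A : ∀ j : Fin p, Euc n →ₗ[ℝ] Euc (m j)) : Euc n →ₗ[ℝ] Euc n :=
  Tchain m A p

/-- `C = I - T`. -/
def Cmap {n p : ℕ} (m : Fin p → ℕ)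
    (A : ∀ j : Fin p, Euc n →ₗ[ℝ] Euc (m j)) : Euc n →ₗ[ℝ] Euc n :=
  LinearMap.id - Tmap m A

/-- The Krylov space `K_k(C, r) = span(r, Cr, …, C^{k-1} r)`. -/
def krylov {n : ℕ} (C : Euc n →ₗ[ℝ] Euc n) (r : Euc n) (k : ℕ) : Submodule ℝ (Euc n) :=
  Submodule.span ℝ {v | ∃ i < k, v = (C ^ i) r}

/-- `z` is the unique minimizer of `‖x - xs‖²` over `S`. -/
def IsUniqueMinimizer {n : ℕ} (xs : Euc n) (S : Set (Euc n)) (z : Euc n) : Prop :=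
  z ∈ S ∧ ∀ y ∈ S, y ≠ z → ‖z - xs‖ ^ 2 < ‖y - xs‖ ^ 2

/-- The affine Krylov space `x₀ + K_k(C, r)` as a set. -/
def affKrylov {n : ℕ} (x0 : Euc n) (C : Euc n →ₗ[ℝ] Euc n) (r : Euc n) (k : ℕ) :
    Set (Euc n) :=
  (fun v => x0 + v) '' (krylov C r k : Set (Euc n))

/-!
Every `P_j` is the affine orthogonal projection `x ↦ x* + Q_j (x - x*)`, so `P x - x* = T (x - x*)`
and the residual is `x - P x = (I - T)(x - x*)`. Hence
`(1 - ‖T‖) ‖x - x*‖ ≤ ‖x - P x‖ ≤ (1 + ‖T‖) ‖x - x*‖`, and the minimal-residual property of `x_k`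
gives the bound. Here `‖T‖ < 1`: each `Q_j` is non-expansive, `‖T x‖ = ‖x‖` forces `x` into every
`N(A_j)`, hence `x = 0`, and `‖T x‖` attains its maximum on the compact unit sphere.
-/

open Submodule

lemma projSub_apply {n : ℕ} (K : Submodule ℝ (Euc n)) (x : Euc n) :
    projSub K x = K.starProjection x :=
  rfl

lemma ContinuousLinearMap.norm_lt_one_of_norm_apply_lt {E F : Type*} [NormedAddCommGroup E]
    [NormedSpace ℝ E] [FiniteDimensional ℝ E] [SeminormedAddCommGroup F] [NormedSpace ℝ F]
    (L : E →L[ℝ] F) (hL : ∀ x, x ≠ 0 → ‖L x‖ < ‖x‖) : ‖L‖ < 1 := by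
  rcases subsingleton_or_nontrivial E with _ | _
  · simp [Subsingleton.elim L 0]
  obtain ⟨x₀, hx₀, hmax⟩ := (isCompact_sphere (0 : E) 1).exists_isMaxOn
    (NormedSpace.sphere_nonempty.mpr zero_le_one) L.continuous.norm.continuousOn
  rw [mem_sphere_zero_iff_norm] at hx₀
  have hx₀_lt : ‖L x₀‖ < 1 := hx₀ ▸ hL x₀ (norm_ne_zero_iff.mp (by simp [hx₀]))
  refine lt_of_le_of_lt (L.opNorm_le_of_unit_norm (norm_nonneg _) fun x hx => ?_) hx₀_lt
  exact hmax (mem_sphere_zero_iff_norm.mpr hx)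

lemma ContinuousLinearMap.mul_norm_le_norm_sub_apply {E : Type*} [SeminormedAddCommGroup E]
    [NormedSpace ℝ E] (L : E →L[ℝ] E) (v : E) : (1 - ‖L‖) * ‖v‖ ≤ ‖v - L v‖ := by
  have := norm_sub_norm_le v (L v)
  nlinarith [L.le_opNorm v]

lemma ContinuousLinearMap.norm_sub_apply_le_mul_norm {E : Type*} [SeminormedAddCommGroup E]
    [NormedSpace ℝ E] (L : E →L[ℝ] E) (v : E) : ‖v - L v‖ ≤ (1 + ‖L‖) * ‖v‖ := by
  have := norm_sub_le v (L v)
  nlinarith [L.le_opNorm v]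

lemma IsNearestPointMap.apply_sub_eq_projSub {n m : ℕ} {B : Euc n →ₗ[ℝ] Euc m} {c : Euc m}
    {f : Euc n → Euc n} (hf : IsNearestPointMap {z | B z = c} f) {s : Euc n} (hs : B s = c)
    (x : Euc n) : f x - s = projSub (LinearMap.ker B) (x - s) := by
  set K := LinearMap.ker B
  obtain ⟨hfx, hmin⟩ := hf x
  have hfx_K : f x - s ∈ K := by
    rw [LinearMap.mem_ker, map_sub, hfx, hs, sub_self]
  have hmin_K : ‖x - s - (f x - s)‖ = ⨅ w : (K : Set (Euc n)), ‖x - s - w‖ := by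
    have hbdd : BddBelow (Set.range fun w : (K : Set (Euc n)) => ‖x - s - w‖) :=
      ⟨0, by rintro _ ⟨w, rfl⟩; exact norm_nonneg _⟩
    refine le_antisymm (le_ciInf fun w => ?_) (ciInf_le hbdd ⟨f x - s, hfx_K⟩)
    have hw : B (w + s) = c := by
      rw [map_add, LinearMap.mem_ker.mp w.2, hs, zero_add]
    calc ‖x - s - (f x - s)‖ = dist x (f x) := by rw [dist_eq_norm, sub_sub_sub_cancel_right]
      _ ≤ dist x (w + s) := hmin _ hw
      _ = ‖x - s - w‖ := by rw [dist_eq_norm, sub_add_eq_sub_sub, sub_right_comm]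
  rw [projSub_apply, eq_starProjection_of_mem_of_inner_eq_zero hfx_K
    ((norm_eq_iInf_iff_real_inner_eq_zero K hfx_K).mp hmin_K)]

section Kaczmarz

variable {n p : ℕ} (m : Fin p → ℕ) (A : ∀ j : Fin p, Euc n →ₗ[ℝ] Euc (m j))

lemma mem_ker_fullA_iff (x : Euc n) : x ∈ LinearMap.ker (fullA m A) ↔ ∀ j, A j x = 0 := by
  simp [fullA, funext_iff]

lemma norm_Tchain_apply_le (x : Euc n) (j : ℕ) : ‖Tchain m A j x‖ ≤ ‖x‖ := by
  induction j with
  | zero => rfl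
  | succ j ih =>
    by_cases h : j < p
    · rw [Tchain, dif_pos h, LinearMap.comp_apply, projSub_apply]
      exact (norm_starProjection_apply_le _ _).trans ih
    · rwa [Tchain, dif_neg h]

lemma Tchain_apply_eq_self_and_mem_ker_of_norm_eq (x : Euc n) (j : ℕ)
    (hx : ‖Tchain m A j x‖ = ‖x‖) :
    Tchain m A j x = x ∧ ∀ i : Fin p, (i : ℕ) < j → x ∈ LinearMap.ker (A i) := by
  induction j with
  | zero => exact ⟨rfl, fun i hi => absurd hi (Nat.not_lt_zero _)⟩
  | succ j ih =>
    by_cases h : j < p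
    · rw [Tchain, dif_pos h, LinearMap.comp_apply, projSub_apply] at hx ⊢
      set K := LinearMap.ker (A ⟨j, h⟩)
      have hle := norm_starProjection_apply_le K (Tchain m A j x)
      obtain ⟨hfix, hker⟩ := ih (le_antisymm (norm_Tchain_apply_le m A x j) (hx ▸ hle))
      rw [hfix] at hx ⊢
      have hxK : x ∈ K := (K.mem_iff_norm_starProjection x).mpr hx
      refine ⟨K.starProjection_eq_self_iff.mpr hxK, fun i hi => ?_⟩
      rcases Nat.lt_succ_iff_lt_or_eq.mp hi with hi | hi
      · exact hker i hi
      · exact (Fin.ext hi : i = ⟨j, h⟩) ▸ hxK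
    · rw [Tchain, dif_neg h] at hx ⊢
      obtain ⟨hfix, hker⟩ := ih hx
      exact ⟨hfix, fun i _ => hker i (i.isLt.trans_le (not_lt.mp h))⟩

lemma norm_Tmap_lt_one (hrank : LinearMap.ker (fullA m A) = ⊥) :
    ‖LinearMap.toContinuousLinearMap (Tmap m A)‖ < 1 := by
  refine ContinuousLinearMap.norm_lt_one_of_norm_apply_lt _ fun x hx => ?_
  refine (norm_Tchain_apply_le m A x p).lt_of_ne fun hnorm => hx ?_
  have hker := (Tchain_apply_eq_self_and_mem_ker_of_norm_eq m A x p hnorm).2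
  rw [← Submodule.mem_bot ℝ, ← hrank, mem_ker_fullA_iff]
  exact fun j => hker j j.isLt

variable {m A} {b : ∀ j : Fin p, Euc (m j)} {Pj : Fin p → Euc n → Euc n}

lemma chainK_sub_eq_Tchain (hPj : ∀ j, IsNearestPointMap {z : Euc n | A j z = b j} (Pj j))
    {xs : Euc n} (hxs : ∀ j, A j xs = b j) (x : Euc n) (j : ℕ) :
    chainK Pj x j - xs = Tchain m A j (x - xs) := by
  induction j with
  | zero => rfl
  | succ j ih =>
    by_cases h : j < p
    · rw [chainK, Tchain, dif_pos h, dif_pos h, LinearMap.comp_apply, ← ih,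
        (hPj _).apply_sub_eq_projSub (hxs _)]
    · rwa [chainK, Tchain, dif_neg h, dif_neg h]

lemma sub_kacz_eq (hPj : ∀ j, IsNearestPointMap {z : Euc n | A j z = b j} (Pj j))
    {xs : Euc n} (hxs : ∀ j, A j xs = b j) (x : Euc n) :
    x - kacz Pj x = (x - xs) - Tmap m A (x - xs) := by
  rw [kacz, Tmap, ← chainK_sub_eq_Tchain hPj hxs, sub_sub_sub_cancel_right]

end Kaczmarz

theorem stmt14_general
    {n p : ℕ} (msz : Fin p → ℕ)
    (A : ∀ j : Fin p, Euc n →ₗ[ℝ] Euc (msz j))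
    (b : ∀ j : Fin p, Euc (msz j))
    (Pj : Fin p → Euc n → Euc n)
    (hPj : ∀ j : Fin p, IsNearestPointMap {z : Euc n | A j z = b j} (Pj j))
    (hrank : LinearMap.ker (fullA msz A) = ⊥)
    (xs : Euc n) (hxs : ∀ j, A j xs = b j)
    (x0 : Euc n) (k : ℕ) (xk : Euc n)
    (hminres : ∀ u ∈ affKrylov x0 (Cmap msz A) (kacz Pj (0 : Euc n) - Cmap msz A x0) k,
      ‖xk - kacz Pj xk‖ ≤ ‖u - kacz Pj u‖) :
    ∀ u ∈ affKrylov x0 (Cmap msz A) (kacz Pj (0 : Euc n) - Cmap msz A x0) k,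
      ‖xk - xs‖ ≤
        ((1 + ‖LinearMap.toContinuousLinearMap (Tmap msz A)‖) /
          (1 - ‖LinearMap.toContinuousLinearMap (Tmap msz A)‖)) * ‖u - xs‖ := by
  intro u hu
  set T := LinearMap.toContinuousLinearMap (Tmap msz A)
  have hT : ‖T‖ < 1 := norm_Tmap_lt_one msz A hrank
  rw [div_mul_eq_mul_div, le_div_iff₀ (sub_pos.mpr hT), mul_comm]
  calc (1 - ‖T‖) * ‖xk - xs‖ ≤ ‖xk - kacz Pj xk‖ := by
        rw [sub_kacz_eq hPj hxs]; exact T.mul_norm_le_norm_sub_apply _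
    _ ≤ ‖u - kacz Pj u‖ := hminres u hu
    _ ≤ (1 + ‖T‖) * ‖u - xs‖ := by
        rw [sub_kacz_eq hPj hxs]; exact T.norm_sub_apply_le_mul_norm _

theorem stmt14
    {n p : ℕ} (msz : Fin p → ℕ)
    (A : ∀ j : Fin p, Euc n →ₗ[ℝ] Euc (msz j))
    (b : ∀ j : Fin p, Euc (msz j))
    (hcons : ∃ z : Euc n, ∀ j, A j z = b j)
    (Pj : Fin p → Euc n → Euc n)
    (hPj : ∀ j : Fin p, IsNearestPointMap {z : Euc n | A j z = b j} (Pj j))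
    (hrank : LinearMap.ker (fullA msz A) = ⊥)
    (xs : Euc n) (hxs : ∀ j, A j xs = b j)
    (x0 : Euc n) (k : ℕ) (xk : Euc n)
    (hxk : xk ∈ affKrylov x0 (Cmap msz A) (kacz Pj (0 : Euc n) - Cmap msz A x0) k)
    (hminres : ∀ u ∈ affKrylov x0 (Cmap msz A) (kacz Pj (0 : Euc n) - Cmap msz A x0) k,
      ‖xk - kacz Pj xk‖ ≤ ‖u - kacz Pj u‖) :
    ∀ u ∈ affKrylov x0 (Cmap msz A) (kacz Pj (0 : Euc n) - Cmap msz A x0) k,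
      ‖xk - xs‖ ≤
        ((1 + ‖LinearMap.toContinuousLinearMap (Tmap msz A)‖) /
          (1 - ‖LinearMap.toContinuousLinearMap (Tmap msz A)‖)) * ‖u - xs‖ :=
  stmt14_general msz A b Pj hPj hrank xs hxs x0 k xk hminres

end
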